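/- arXiv:1505.02632 — 3 statements merged into one kernel-verified Lean document; each statement's English description precedes it below -/
import Mathlib

section
/- Let d, n, a be natural numbers with d dividing n and gcd(a,n) = 1, and let π_a : Z_n → Z_n be the permutation π_a(x) = a·x (mod n). Then the restriction τ of π_a to the set Ω_n^d of elements of additive order d is a permutation of Ω_n^d, every cycle of τ has length k = r_a(d) (the multiplicative order of a modulo d), and τ has exactly φ(d)/r_a(d) cycles. In particular, for every x ∈ Z_n of additive order d, the least s ≥ 1 with a^s·x ≡ x (mod n) equals r_a(d). -/
/-!
For `x` of additive order `d`, an integer `c` satisfies `c • x = x` iff `c ≡ 1 [ZMOD d]`.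
Hence `a ^ s * x = x` iff `r_a(d) ∣ s`, so every `x ∈ Ω_n^d` has minimal period exactly
`r_a(d)` under `π_a`. Multiplication by a unit preserves additive orders, so `π_a` permutes
`Ω_n^d`, a set of `φ(d)` elements because `ℤ_n` is cyclic; all its cycles having length
`r_a(d)`, there are `φ(d) / r_a(d)` of them.
-/

open Function MulAction Subgroup

theorem addOrderOf_mul_left_of_isUnit {R : Type*} [Semiring R] {u : R} (hu : IsUnit u) (x : R) :
    addOrderOf (u * x) = addOrderOf x :=
  addOrderOf_injective (AddMonoidHom.mulLeft u) hu.mul_right_injective x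

theorem intCast_mul_eq_self_iff {R : Type*} [Ring R] (c : ℤ) (x : R) :
    (c : R) * x = x ↔ (c : ZMod (addOrderOf x)) = 1 := by
  rw [← sub_eq_zero, ← sub_one_mul, ← Int.cast_one, ← Int.cast_sub, ← zsmul_eq_mul,
    ← addOrderOf_dvd_iff_zsmul_eq_zero, ← ZMod.intCast_zmod_eq_zero_iff_dvd, Int.cast_sub,
    Int.cast_one, sub_eq_zero]

theorem minimalPeriod_natCast_mul {R : Type*} [Ring R] (a : ℕ) (x : R) :
    minimalPeriod ((a : R) * ·) x = orderOf (a : ZMod (addOrderOf x)) := by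
  refine Nat.dvd_right_iff_eq.mp fun s => ?_
  rw [← isPeriodicPt_iff_minimalPeriod_dvd, orderOf_dvd_iff_pow_eq_one, IsPeriodicPt, IsFixedPt,
    mul_left_iterate_apply, ← Nat.cast_pow, ← Int.cast_natCast, intCast_mul_eq_self_iff]
  push_cast
  rfl

namespace Equiv.Perm

theorem sameCycle_iff_orbitRel_zpowers {α : Type*} (σ : Perm α) (x y : α) :
    σ.SameCycle x y ↔ orbitRel (zpowers σ) α x y := by
  rw [orbitRel_apply, mem_orbit_iff, exists_zpowers, sameCycle_comm]
  rfl

theorem card_quot_sameCycle_mul_eq_card {α : Type*} (σ : Perm α) {k : ℕ}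
    (hk : ∀ x, minimalPeriod σ x = k) : Nat.card (Quot σ.SameCycle) * k = Nat.card α := by
  let e : α ≃ Σ q : orbitRel.Quotient (zpowers σ) α, ZMod k :=
    (selfEquivSigmaOrbits (zpowers σ) α).trans <| Equiv.sigmaCongrRight fun q =>
      (orbitZPowersEquiv σ q.out).trans (Equiv.cast (congrArg ZMod (hk q.out)))
  rw [Nat.card_congr (e.trans (Equiv.sigmaEquivProd _ _)), Nat.card_prod, Nat.card_zmod,
    Nat.card_congr (Quot.congrRight σ.sameCycle_iff_orbitRel_zpowers)]
  rfl

theorem minimalPeriod_subtypePerm {α : Type*} {p : α → Prop} (f : Perm α)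
    (h : ∀ x, p (f x) ↔ p x) (x : {x // p x}) :
    minimalPeriod (f.subtypePerm h) x = minimalPeriod f x :=
  minimalPeriod_eq_minimalPeriod_iff.mpr fun s => by
    have : Semiconj Subtype.val (f.subtypePerm h) f := fun _ => rfl
    simp only [IsPeriodicPt, IsFixedPt, Subtype.ext_iff, this.iterate_right s x]

end Equiv.Perm

theorem ZMod.orderOf_natCast_pos {d a : ℕ} [NeZero d] (h : a.Coprime d) :
    0 < orderOf (a : ZMod d) := by
  rw [← ZMod.coe_unitOfCoprime a h, orderOf_units]
  exact orderOf_pos _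

theorem ZMod.card_addOrderOf_eq_totient {n d : ℕ} [NeZero n] (hd : d ∣ n) :
    Nat.card {x : ZMod n // addOrderOf x = d} = d.totient := by
  rw [Nat.card_eq_fintype_card, Fintype.card_subtype]
  exact IsAddCyclic.card_addOrderOf_eq_totient (by rwa [ZMod.card])

/-- Let `d ∣ n`, `gcd(a,n) = 1`, and let `π_a : ℤ_n → ℤ_n` be
`x ↦ a·x`. Then `π_a` restricts to a permutation `τ` of the set `Ω_n^d` of elements
of additive order `d`; every cycle of `τ` has length `k = r_a(d)`, the multiplicative
order of `a` modulo `d`; `τ` has exactly `φ(d)/r_a(d)` cycles; and for every `x` of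
additive order `d`, the least `s ≥ 1` with `a^s·x ≡ x (mod n)` equals `r_a(d)`. -/
theorem restriction_cycle_structure (n d a : ℕ) [NeZero n] (hd : d ∣ n)
    (ha : Nat.Coprime a n) :
    -- τ is a permutation of Ω_n^d
    (∀ x : ZMod n, addOrderOf x = d ↔ addOrderOf ((a : ZMod n) * x) = d) ∧
    -- every cycle of τ has length r_a(d)
    (∀ x : ZMod n, addOrderOf x = d →
      Function.minimalPeriod (fun y : ZMod n => (a : ZMod n) * y) x
        = orderOf (a : ZMod d)) ∧
    -- τ has exactly φ(d)/r_a(d) cycles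
    Nat.card (Quot fun x y : {x : ZMod n // addOrderOf x = d} =>
        (MulAction.toPerm (ZMod.unitOfCoprime a ha)).SameCycle x.val y.val)
      = Nat.totient d / orderOf (a : ZMod d) ∧
    -- the least s ≥ 1 with a^s·x = x equals r_a(d)
    (∀ x : ZMod n, addOrderOf x = d →
      sInf {s : ℕ | 1 ≤ s ∧ (a : ZMod n) ^ s * x = x} = orderOf (a : ZMod d)) := by
  set u := ZMod.unitOfCoprime a ha
  have hu : ⇑(toPerm u) = ((a : ZMod n) * ·) := funext fun y => by
    simp [u, toPerm_apply, Units.smul_def]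
  have horder (x : ZMod n) : addOrderOf ((a : ZMod n) * x) = addOrderOf x :=
    addOrderOf_mul_left_of_isUnit (ZMod.coe_unitOfCoprime a ha ▸ u.isUnit) x
  have hperiod (x : ZMod n) (hx : addOrderOf x = d) :
      minimalPeriod ((a : ZMod n) * ·) x = orderOf (a : ZMod d) :=
    hx ▸ minimalPeriod_natCast_mul a x
  refine ⟨fun x => by rw [horder], hperiod, ?_, fun x hx => ?_⟩
  · have : NeZero d := ⟨(Nat.pos_of_dvd_of_pos hd (NeZero.pos n)).ne'⟩
    let τ := (toPerm u).subtypePerm (p := fun x => addOrderOf x = d) fun x => by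
      rw [hu, horder]
    have hcycles := τ.card_quot_sameCycle_mul_eq_card fun x => by
      rw [Equiv.Perm.minimalPeriod_subtypePerm, hu, hperiod x x.2]
    rw [ZMod.card_addOrderOf_eq_totient hd] at hcycles
    rw [← hcycles, Nat.mul_div_cancel _ (ZMod.orderOf_natCast_pos (ha.coprime_dvd_right hd))]
    exact Nat.card_congr (Quot.congrRight fun x y => Equiv.Perm.sameCycle_subtypePerm.symm)
  · rw [← hperiod x hx, minimalPeriod_eq_sInf_n_pos_IsPeriodicPt]
    congr
    ext s
    rw [IsPeriodicPt, IsFixedPt, mul_left_iterate_apply]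
    rfl
end

section
/- Let n, a be natural numbers with gcd(a,n) = 1 and let π_a : Z_n → Z_n be the permutation π_a(x) = a·x (mod n). Then for every natural number ℓ, the number of cycles of length ℓ in the disjoint cycle decomposition of π_a equals (1/ℓ)·Σ φ(d), where the sum is over all divisors d of n with r_a(d) = ℓ. Equivalently, the cycle type of π_a is Π_{d | n} x_{r_a(d)}^{φ(d)/r_a(d)}. -/
/-!
A cycle of a permutation `σ` through `x` has exactly `minimalPeriod σ x` elements, so `ℓ` times
the number of `ℓ`-cycles is the number of points of period `ℓ`. Under `x ↦ a • x` on a cyclic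
group the period of `x` is the multiplicative order of `a` modulo the additive order of `x`, and
for each `d ∣ n` exactly `φ d` elements of `ZMod n` have additive order `d`.
-/

open Function Finset

theorem Nat.card_eq_card_mul_of_card_fiber {α β : Type*} [Finite α] [Finite β] (f : α → β)
    {k : ℕ} (hf : ∀ b, Nat.card {a // f a = b} = k) : Nat.card α = Nat.card β * k := by
  have := Fintype.ofFinite β
  rw [Nat.card_congr (Equiv.sigmaFiberEquiv f).symm, Nat.card_sigma]
  simp [hf, Nat.card_eq_fintype_card]

namespace Equiv.Perm

variable {α : Type*} (σ : Perm α)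

theorem sameCycle_iff_mem_orbit_zpowers {x y : α} :
    σ.SameCycle x y ↔ y ∈ MulAction.orbit (Subgroup.zpowers σ) x := by
  rw [MulAction.mem_orbit_iff, Subgroup.exists_zpowers]
  rfl

variable [Finite α]

theorem card_sameCycle_eq_minimalPeriod (x : α) :
    Nat.card {y // σ.SameCycle x y} = minimalPeriod σ x := by
  classical
  have := Fintype.ofFinite α
  calc Nat.card {y // σ.SameCycle x y}
      = Nat.card (MulAction.orbit (Subgroup.zpowers σ) x) :=
        Nat.card_congr (Equiv.subtypeEquivRight fun _ => σ.sameCycle_iff_mem_orbit_zpowers)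
    _ = minimalPeriod (σ • ·) x := by
        rw [MulAction.minimalPeriod_eq_card, Nat.card_eq_fintype_card]
    _ = minimalPeriod σ x := rfl

theorem SameCycle.minimalPeriod_eq {σ : Perm α} {x y : α} (h : σ.SameCycle x y) :
    minimalPeriod σ x = minimalPeriod σ y := by
  rw [← card_sameCycle_eq_minimalPeriod, ← card_sameCycle_eq_minimalPeriod]
  exact Nat.card_congr (Equiv.subtypeEquivRight fun _ => ⟨h.symm.trans, h.trans⟩)

theorem mul_card_quot_sameCycle_minimalPeriod_eq (ℓ : ℕ) :
    ℓ * Nat.card (Quot fun x y : {x // minimalPeriod σ x = ℓ} => σ.SameCycle x y) =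
      Nat.card {x // minimalPeriod σ x = ℓ} := by
  set r := fun x y : {x // minimalPeriod σ x = ℓ} => σ.SameCycle x y
  have hr : Equivalence r := ⟨fun x => SameCycle.refl σ x, SameCycle.symm, SameCycle.trans⟩
  rw [mul_comm, Nat.card_eq_card_mul_of_card_fiber (Quot.mk r)]
  rintro ⟨x, hx⟩
  have fiber : {y : {x // minimalPeriod σ x = ℓ} // Quot.mk r y = Quot.mk r ⟨x, hx⟩} ≃
      {y // σ.SameCycle x y} :=
    { toFun y := ⟨y.1.1, (hr.eqvGen_iff.1 (Quot.eqvGen_exact y.2)).symm⟩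
      invFun y := ⟨⟨y.1, y.2.minimalPeriod_eq ▸ hx⟩, Quot.sound y.2.symm⟩
      left_inv _ := rfl
      right_inv _ := rfl }
  rw [Nat.card_congr fiber, card_sameCycle_eq_minimalPeriod, hx]

end Equiv.Perm

section AddCommGroup

variable {G : Type*} [AddCommGroup G] (a : ℕ)

theorem isPeriodicPt_nsmul_iff_orderOf_dvd (x : G) (k : ℕ) :
    IsPeriodicPt (a • ·) k x ↔ orderOf (a : ZMod (addOrderOf x)) ∣ k := by
  rw [IsPeriodicPt, IsFixedPt, smul_iterate, orderOf_dvd_iff_pow_eq_one, ← Nat.cast_pow,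
    ← Nat.cast_one, ZMod.natCast_eq_natCast_iff, ← nsmul_eq_nsmul_iff_modEq, one_nsmul]

theorem minimalPeriod_nsmul_eq_orderOf (x : G) :
    minimalPeriod (a • ·) x = orderOf (a : ZMod (addOrderOf x)) :=
  Nat.dvd_antisymm
    ((isPeriodicPt_nsmul_iff_orderOf_dvd a x _).2 dvd_rfl).minimalPeriod_dvd
    ((isPeriodicPt_nsmul_iff_orderOf_dvd a x _).1 (isPeriodicPt_minimalPeriod _ _))

theorem card_filter_minimalPeriod_nsmul_eq_sum_totient [Fintype G] [DecidableEq G]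
    [IsAddCyclic G] (ℓ : ℕ) :
    #{x : G | minimalPeriod (a • ·) x = ℓ} =
      ∑ d ∈ (Fintype.card G).divisors with orderOf (a : ZMod d) = ℓ, d.totient := by
  rw [card_eq_sum_card_fiberwise (f := addOrderOf)]
  · refine sum_congr rfl fun d hd => ?_
    rw [mem_filter, Nat.mem_divisors] at hd
    rw [← IsAddCyclic.card_addOrderOf_eq_totient hd.1.1, filter_filter]
    congr! 2 with x
    rw [minimalPeriod_nsmul_eq_orderOf, and_iff_right_iff_imp]
    rintro rfl
    exact hd.2
  · intro x hx
    simp only [coe_filter, mem_univ, true_and, Set.mem_ofPred_eq, Nat.mem_divisors] at hx ⊢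
    exact ⟨⟨addOrderOf_dvd_card, Fintype.card_ne_zero⟩, minimalPeriod_nsmul_eq_orderOf a x ▸ hx⟩

end AddCommGroup

/-- Let `gcd(a,n) = 1` and `π_a : ℤ_n → ℤ_n`, `π_a(x) = a·x`. For
every `ℓ`, the number of cycles of length `ℓ` in the disjoint cycle decomposition of
`π_a` (fixed points counting as `1`-cycles) equals `(1/ℓ)·Σ_{d ∣ n, r_a(d) = ℓ} φ(d)`;
equivalently, `ℓ` times the number of `ℓ`-cycles equals the sum of `φ(d)` over
divisors `d` of `n` with `r_a(d) = ℓ`. -/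
theorem cycle_count_eq_totient_sum (n a : ℕ) [NeZero n] (ha : Nat.Coprime a n)
    (ℓ : ℕ) :
    ℓ * Nat.card (Quot fun x y :
        {x : ZMod n // Function.minimalPeriod (fun z : ZMod n => (a : ZMod n) * z) x = ℓ} =>
        (MulAction.toPerm (ZMod.unitOfCoprime a ha)).SameCycle x.val y.val)
      = ∑ d ∈ n.divisors.filter (fun d => orderOf (a : ZMod d) = ℓ), Nat.totient d := by
  have hσ : ⇑(MulAction.toPerm (ZMod.unitOfCoprime a ha)) = (a • · : ZMod n → ZMod n) :=
    funext fun z => (nsmul_eq_mul a z).symm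
  have hmul : (fun z : ZMod n => (a : ZMod n) * z) = (a • ·) :=
    funext fun z => (nsmul_eq_mul a z).symm
  rw [hmul, ← hσ, Equiv.Perm.mul_card_quot_sameCycle_minimalPeriod_eq, hσ,
    Nat.card_eq_fintype_card, Fintype.card_subtype,
    card_filter_minimalPeriod_nsmul_eq_sum_totient, ZMod.card]
end

section
/- Let l ≥ 1, s ≥ 0 be integers and let r be an odd natural number, and set a = −3^{2^s · r}. Then the multiplicative order r_a(2^l) of a modulo 2^l is: 1 if l = 1; 1 if l = 2 and s = 0; 2 if l = 2 and s ≥ 1; 2^{l−2−s} if l ≥ 3 and s < l−2; and 2 if l ≥ 3 and s ≥ l−2. -/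
/-!
By the `2`-adic lifting-the-exponent lemma, `v₂(3ⁿ - 1) = v₂(n) + 2` for even `n ≠ 0`, so
`3 ^ (2 ^ k * r) = 1` in `ZMod (2 ^ l)` exactly when `l ≤ k + 2` (for `k ≥ 1`, `r` odd).
If `l ≤ s + 2` this makes `a = -3 ^ (2 ^ s * r)` equal to `-1`. Otherwise the `2 ^ (j + 1)`-th
power of `a` is `3 ^ (2 ^ (s + j + 1) * r)`, which is `1` precisely from `j + 1 = l - 2 - s` on,
and `a ≠ 1` because no power of `3` is `-1` modulo `8`.
-/

theorem ZMod.orderOf_neg_one {n : ℕ} (hn : 2 < n) : orderOf (-1 : ZMod n) = 2 := by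
  have : Fact (1 < n) := ⟨by omega⟩
  rw [_root_.orderOf_neg_one, ZMod.ringChar_zmod_n, if_neg hn.ne']

theorem padicValNat_three_pow_sub_one {n : ℕ} (hn : n ≠ 0) (hn_even : Even n) :
    padicValNat 2 (3 ^ n - 1) = padicValNat 2 n + 2 := by
  have := padicValNat.pow_two_sub_one (x := 3) (by norm_num) (by norm_num) hn hn_even
  have h4 : padicValNat 2 4 = 2 := padicValNat.prime_pow (p := 2) 2
  norm_num [h4] at this
  omega

theorem padicValNat_two_pow_mul_of_odd (k : ℕ) {r : ℕ} (hr : Odd r) :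
    padicValNat 2 (2 ^ k * r) = k := by
  rw [padicValNat.mul (by positivity) hr.pos.ne', padicValNat.prime_pow,
    padicValNat.eq_zero_of_not_dvd hr.not_two_dvd_nat, add_zero]

theorem three_pow_eq_one_iff {l n : ℕ} (hn : n ≠ 0) (hn_even : Even n) :
    (3 : ZMod (2 ^ l)) ^ n = 1 ↔ l ≤ padicValNat 2 n + 2 := by
  have h1 : 1 ≤ 3 ^ n := Nat.one_le_pow _ _ (by norm_num)
  have hne : 3 ^ n - 1 ≠ 0 := Nat.sub_ne_zero_of_lt (Nat.one_lt_pow hn (by norm_num))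
  rw [← padicValNat_three_pow_sub_one hn hn_even, ← padicValNat_dvd_iff_le hne,
    ← Nat.modEq_iff_dvd' h1, ← ZMod.natCast_eq_natCast_iff, eq_comm]
  push_cast
  rfl

theorem three_pow_two_pow_mul_eq_one_iff {l k r : ℕ} (hk : k ≠ 0) (hr : Odd r) :
    (3 : ZMod (2 ^ l)) ^ (2 ^ k * r) = 1 ↔ l ≤ k + 2 := by
  have hn_even : Even (2 ^ k * r) := (Nat.even_pow.2 ⟨even_two, hk⟩).mul_right r
  rw [three_pow_eq_one_iff (mul_ne_zero (by positivity) hr.pos.ne') hn_even,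
    padicValNat_two_pow_mul_of_odd k hr]

theorem three_pow_ne_neg_one {l : ℕ} (hl : 3 ≤ l) (n : ℕ) : (3 : ZMod (2 ^ l)) ^ n ≠ -1 := by
  intro h
  have h8 := congrArg (ZMod.castHom (pow_dvd_pow 2 hl) (ZMod (2 ^ 3))) h
  simp only [map_pow, map_neg, map_one, map_ofNat] at h8
  rw [← Nat.div_add_mod n 2, pow_add, pow_mul, show (3 : ZMod (2 ^ 3)) ^ 2 = 1 by decide, one_pow,
    one_mul] at h8
  rcases Nat.mod_two_eq_zero_or_one n with h | h <;> rw [h] at h8 <;> revert h8 <;> decide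

theorem neg_pow_two_pow_mul_pow_two_pow_succ {M : Type*} [Monoid M] [HasDistribNeg M] (x : M)
    (s r j : ℕ) : (-x ^ (2 ^ s * r)) ^ 2 ^ (j + 1) = x ^ (2 ^ (s + j + 1) * r) := by
  rw [(Nat.even_pow.2 ⟨even_two, j.add_one_ne_zero⟩).neg_pow, ← pow_mul]
  congr 1
  ring

theorem orderOf_neg_three_pow_of_add_three_le {l s r : ℕ} (hr : Odd r) (hsl : s + 3 ≤ l) :
    orderOf (-(3 : ZMod (2 ^ l)) ^ (2 ^ s * r)) = 2 ^ (l - 2 - s) := by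
  obtain ⟨e, rfl⟩ : ∃ e, l = s + e + 3 := ⟨l - s - 3, by omega⟩
  rw [show s + e + 3 - 2 - s = e + 1 by omega]
  refine orderOf_eq_prime_pow ?_ ?_
  · rcases e with _ | e
    · rw [pow_zero, pow_one, neg_eq_iff_eq_neg]
      exact three_pow_ne_neg_one (by omega) _
    · rw [neg_pow_two_pow_mul_pow_two_pow_succ, three_pow_two_pow_mul_eq_one_iff (by omega) hr]
      omega
  · rw [neg_pow_two_pow_mul_pow_two_pow_succ, three_pow_two_pow_mul_eq_one_iff (by omega) hr]

theorem orderOf_neg_three_pow_of_le_add_two {l s r : ℕ} (hr : Odd r) (hl : 2 ≤ l) (hs : s ≠ 0)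
    (hls : l ≤ s + 2) : orderOf (-(3 : ZMod (2 ^ l)) ^ (2 ^ s * r)) = 2 := by
  rw [(three_pow_two_pow_mul_eq_one_iff hs hr).2 hls, ZMod.orderOf_neg_one]
  calc 2 < 2 ^ 2 := by norm_num
    _ ≤ 2 ^ l := Nat.pow_le_pow_right two_pos hl

/-- Let `l ≥ 1`, `s ≥ 0`, `r` odd, and `a = −3^(2^s·r)`. Then the
multiplicative order of `a` modulo `2^l` is: `1` if `l = 1`; `1` if `l = 2, s = 0`;
`2` if `l = 2, s ≥ 1`; `2^(l−2−s)` if `l ≥ 3, s < l−2`; and `2` if `l ≥ 3, s ≥ l−2`. -/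
theorem orderOf_neg_three_pow_mod_two_pow (l s r : ℕ) (hl : 1 ≤ l) (hr : Odd r) :
    orderOf (-(3 : ZMod (2 ^ l)) ^ (2 ^ s * r)) =
      if l = 1 then 1
      else if l = 2 then (if s = 0 then 1 else 2)
      else if s < l - 2 then 2 ^ (l - 2 - s) else 2 := by
  obtain rfl | rfl | hl3 : l = 1 ∨ l = 2 ∨ 3 ≤ l := by omega
  · rw [if_pos rfl, orderOf_eq_one_iff, show (3 : ZMod (2 ^ 1)) = 1 by decide, one_pow]
    decide
  · rw [if_neg (by norm_num), if_pos rfl]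
    split_ifs with hs
    · rw [orderOf_eq_one_iff, show (3 : ZMod (2 ^ 2)) = -1 by decide, hs, pow_zero, one_mul,
        hr.neg_one_pow, neg_neg]
    · exact orderOf_neg_three_pow_of_le_add_two hr le_rfl hs (by omega)
  · rw [if_neg (by omega), if_neg (by omega)]
    split_ifs with hs
    · exact orderOf_neg_three_pow_of_add_three_le hr (by omega)
    · exact orderOf_neg_three_pow_of_le_add_two hr (by omega) (by omega) (by omega)
end
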